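/- Let n ≥ 3 and let P be an n-partite biseparable distribution, i.e., a convex combination over bipartitions g|ḡ of products Q(a⃗_g|x⃗_g, λ)·R(a⃗_ḡ|x⃗_ḡ, λ) with each factor no-signalling. Then P satisfies both I_sym = ∑_{i<j} I^{ij}_{0⃗|0⃗} − C(n−1,2)·P(0⃗|0⃗) ≤ 0 and I_① = ∑_{j=2}^{n} I^{1j}_{0⃗|0⃗} − (n−2)·P(0⃗|0⃗) ≤ 0. -/

import Mathlib

open Finset

noncomputable section

/-- `Q` depends only on the outcomes and inputs of the parties in `S`. -/
def DepOn {n : ℕ} (S : Finset (Fin n))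
    (Q : (Fin n → Fin 2) → (Fin n → Fin 2) → ℝ) : Prop :=
  ∀ a a' x x' : Fin n → Fin 2, (∀ k ∈ S, a k = a' k) → (∀ k ∈ S, x k = x' k) →
    Q a x = Q a' x'

/-- `Q` is a probability distribution on the group `S` of parties. -/
def IsDistOn {n : ℕ} (S : Finset (Fin n))
    (Q : (Fin n → Fin 2) → (Fin n → Fin 2) → ℝ) : Prop :=
  (∀ a x, 0 ≤ Q a x) ∧ (∀ x, ∑ a, Q a x = 2 ^ (n - S.card)) ∧ DepOn S Q

/-- `Q` is no-signalling. -/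
def IsNS {n : ℕ} (Q : (Fin n → Fin 2) → (Fin n → Fin 2) → ℝ) : Prop :=
  ∀ (k : Fin n) (a x x' : Fin n → Fin 2), (∀ l, l ≠ k → x l = x' l) →
    ∑ v, Q (Function.update a k v) x = ∑ v, Q (Function.update a k v) x'

/-- The all-zero outcome/input string. -/
def zvec (n : ℕ) : Fin n → Fin 2 := fun _ => 0

/-- The string which is zero except at positions `i` (value `u`) and `j` (value `v`). -/
def upd2 (n : ℕ) (i j : Fin n) (u v : Fin 2) : Fin n → Fin 2 :=
  Function.update (Function.update (zvec n) i u) j v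

/-- The lifted CHSH-variant `I^{ij}_{0⃗|0⃗}` on parties `i, j`. -/
def liftedCHSH (n : ℕ) (P : (Fin n → Fin 2) → (Fin n → Fin 2) → ℝ) (i j : Fin n) : ℝ :=
  P (upd2 n i j 0 0) (upd2 n i j 0 0) - P (upd2 n i j 1 0) (upd2 n i j 1 0)
    - P (upd2 n i j 0 1) (upd2 n i j 0 1) - P (upd2 n i j 0 0) (upd2 n i j 1 1)

/-- The symmetric Bell expression `I_sym = ∑_{i<j} I^{ij}_{0⃗|0⃗} − C(n−1,2)·P(0⃗|0⃗)`. -/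
def Isym (n : ℕ) (P : (Fin n → Fin 2) → (Fin n → Fin 2) → ℝ) : ℝ :=
  (∑ i, ∑ j ∈ univ.filter (fun j => i < j), liftedCHSH n P i j)
    - ((n - 1).choose 2 : ℝ) * P (zvec n) (zvec n)

/-- The centered Bell expression `I_① = ∑_{j>1} I^{1j}_{0⃗|0⃗} − (n−2)·P(0⃗|0⃗)`. -/
def Icent (n : ℕ) (hn : 3 ≤ n) (P : (Fin n → Fin 2) → (Fin n → Fin 2) → ℝ) : ℝ :=
  (∑ j ∈ univ.filter (fun j => (⟨0, by omega⟩ : Fin n) < j),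
      liftedCHSH n P ⟨0, by omega⟩ j)
    - ((n : ℝ) - 2) * P (zvec n) (zvec n)

/-! Both inequalities are linear in `P`, so it suffices to prove them for a single product
`Q · R` of no-signalling distributions on a bipartition `S | Sᶜ`. When `i` and `j` lie on
different sides, `Q` sees only party `i` and `R` only party `j`, and `I^{ij}` is a two-party
CHSH-type expression of a product distribution, hence `≤ 0`. For any `i, j`, nonnegativity gives
`I^{ij} ≤ P(0⃗|0⃗)`. So each expression is at most `P(0⃗|0⃗)` times the number of its pairs lying
within one side minus its constant, and that number is at most `C(#S, 2) + C(#Sᶜ, 2) ≤ C(n-1, 2)`,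
resp. `n - 2`, because both sides are nonempty. -/

lemma chsh_product_nonpos {q00 q01 q10 q11 r00 r01 r10 r11 : ℝ}
    (hq00 : 0 ≤ q00) (hq01 : 0 ≤ q01) (hq10 : 0 ≤ q10) (hq11 : 0 ≤ q11)
    (hr00 : 0 ≤ r00) (hr01 : 0 ≤ r01) (hr10 : 0 ≤ r10) (hr11 : 0 ≤ r11)
    (hq : q00 + q10 = q01 + q11) (hr : r00 + r10 = r01 + r11) :
    q00 * r00 - q11 * r00 - q00 * r11 - q01 * r01 ≤ 0 := by
  -- Eliminating `q11, r11`, the expression is `-q10 r00 - q00 r10 + (q01 - q00) (r00 - r01)`;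
  -- when the last product is positive, the marginal constraints bound it by one of the others.
  rcases le_total q01 q00 with hq' | hq' <;> rcases le_total r01 r00 with hr' | hr' <;>
    nlinarith [mul_nonneg hq10 hr00, mul_nonneg hq00 hr10, mul_nonneg hq11 hr00,
      mul_nonneg hq00 hr11, mul_nonneg (sub_nonneg.mpr hq') (sub_nonneg.mpr hr')]

lemma upd2_zero_zero (n : ℕ) (i j : Fin n) : upd2 n i j 0 0 = zvec n := by
  funext k
  simp [upd2, zvec, Function.update_apply]

lemma upd2_apply_of_ne_right {n : ℕ} {i j k : Fin n} (u v : Fin 2) (hk : k ≠ j) :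
    upd2 n i j u v k = Function.update (zvec n) i u k := by
  rw [upd2, Function.update_of_ne hk]

lemma upd2_apply_of_ne_left {n : ℕ} {i j k : Fin n} (u v : Fin 2) (hk : k ≠ i) :
    upd2 n i j u v k = Function.update (zvec n) j v k := by
  by_cases hkj : k = j
  · subst hkj; simp [upd2]
  · simp [upd2, Function.update_of_ne hkj, Function.update_of_ne hk]

lemma DepOn.apply_upd2_left {n : ℕ} {S : Finset (Fin n)}
    {Q : (Fin n → Fin 2) → (Fin n → Fin 2) → ℝ} (hQ : DepOn S Q) {i j : Fin n} (hj : j ∉ S)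
    (u v u' v' : Fin 2) :
    Q (upd2 n i j u v) (upd2 n i j u' v')
      = Q (Function.update (zvec n) i u) (Function.update (zvec n) i u') :=
  hQ _ _ _ _ (fun _ hk => upd2_apply_of_ne_right u v (ne_of_mem_of_not_mem hk hj))
    (fun _ hk => upd2_apply_of_ne_right u' v' (ne_of_mem_of_not_mem hk hj))

lemma DepOn.apply_upd2_right {n : ℕ} {T : Finset (Fin n)}
    {R : (Fin n → Fin 2) → (Fin n → Fin 2) → ℝ} (hR : DepOn T R) {i j : Fin n} (hi : i ∉ T)
    (u v u' v' : Fin 2) :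
    R (upd2 n i j u v) (upd2 n i j u' v')
      = R (Function.update (zvec n) j v) (Function.update (zvec n) j v') :=
  hR _ _ _ _ (fun _ hk => upd2_apply_of_ne_left u v (ne_of_mem_of_not_mem hk hi))
    (fun _ hk => upd2_apply_of_ne_left u' v' (ne_of_mem_of_not_mem hk hi))

lemma IsNS.marginal_update_zvec {n : ℕ} {Q : (Fin n → Fin 2) → (Fin n → Fin 2) → ℝ}
    (hQ : IsNS Q) (i : Fin n) :
    Q (Function.update (zvec n) i 0) (Function.update (zvec n) i 0)
        + Q (Function.update (zvec n) i 1) (Function.update (zvec n) i 0)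
      = Q (Function.update (zvec n) i 0) (Function.update (zvec n) i 1)
        + Q (Function.update (zvec n) i 1) (Function.update (zvec n) i 1) := by
  simpa only [Fin.sum_univ_two] using hQ i (zvec n) _ _
    (fun l hl => by rw [Function.update_of_ne hl, Function.update_of_ne hl])

lemma liftedCHSH_le_of_nonneg {n : ℕ} {P : (Fin n → Fin 2) → (Fin n → Fin 2) → ℝ}
    (hP : ∀ a x, 0 ≤ P a x) (i j : Fin n) :
    liftedCHSH n P i j ≤ P (zvec n) (zvec n) := by
  have h := hP (upd2 n i j 0 0) (upd2 n i j 1 1)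
  rw [liftedCHSH, upd2_zero_zero] at *
  linarith [hP (upd2 n i j 1 0) (upd2 n i j 1 0), hP (upd2 n i j 0 1) (upd2 n i j 0 1)]

lemma liftedCHSH_mul_nonpos {n : ℕ} {S T : Finset (Fin n)}
    {Q R : (Fin n → Fin 2) → (Fin n → Fin 2) → ℝ}
    (hQ0 : ∀ a x, 0 ≤ Q a x) (hQS : DepOn S Q) (hQns : IsNS Q)
    (hR0 : ∀ a x, 0 ≤ R a x) (hRT : DepOn T R) (hRns : IsNS R)
    {i j : Fin n} (hi : i ∉ T) (hj : j ∉ S) :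
    liftedCHSH n (fun a x => Q a x * R a x) i j ≤ 0 := by
  simp only [liftedCHSH, hQS.apply_upd2_left hj, hRT.apply_upd2_right hi]
  exact chsh_product_nonpos (hQ0 _ _) (hQ0 _ _) (hQ0 _ _) (hQ0 _ _) (hR0 _ _) (hR0 _ _)
    (hR0 _ _) (hR0 _ _) (hQns.marginal_update_zvec i) (hRns.marginal_update_zvec j)

lemma liftedCHSH_mul_le_ite {n : ℕ} {S : Finset (Fin n)}
    {Q R : (Fin n → Fin 2) → (Fin n → Fin 2) → ℝ}
    (hQ0 : ∀ a x, 0 ≤ Q a x) (hQS : DepOn S Q) (hQns : IsNS Q)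
    (hR0 : ∀ a x, 0 ≤ R a x) (hRS : DepOn Sᶜ R) (hRns : IsNS R) (i j : Fin n) :
    liftedCHSH n (fun a x => Q a x * R a x) i j
      ≤ if (i ∈ S ↔ j ∈ S) then Q (zvec n) (zvec n) * R (zvec n) (zvec n) else 0 := by
  split_ifs with hij
  · exact liftedCHSH_le_of_nonneg (fun a x => mul_nonneg (hQ0 a x) (hR0 a x)) i j
  by_cases hi : i ∈ S
  · exact liftedCHSH_mul_nonpos hQ0 hQS hQns hR0 hRS hRns (by simpa using hi) (by tauto)
  · simp_rw [mul_comm (Q _ _)]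
    exact liftedCHSH_mul_nonpos hR0 hRS hRns hQ0 hQS hQns hi
      (by rw [mem_compl, not_not]; tauto)

lemma sum_liftedCHSH_mul_le {n : ℕ} {S : Finset (Fin n)}
    {Q R : (Fin n → Fin 2) → (Fin n → Fin 2) → ℝ}
    (hQ0 : ∀ a x, 0 ≤ Q a x) (hQS : DepOn S Q) (hQns : IsNS Q)
    (hR0 : ∀ a x, 0 ≤ R a x) (hRS : DepOn Sᶜ R) (hRns : IsNS R) (i : Fin n)
    (J : Finset (Fin n)) :
    ∑ j ∈ J, liftedCHSH n (fun a x => Q a x * R a x) i j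
      ≤ #{j ∈ J | i ∈ S ↔ j ∈ S} * (Q (zvec n) (zvec n) * R (zvec n) (zvec n)) := by
  rw [← nsmul_eq_mul, ← sum_const, sum_filter]
  exact sum_le_sum fun j _ => liftedCHSH_mul_le_ite hQ0 hQS hQns hR0 hRS hRns i j

lemma card_filter_lt_same_le {n : ℕ} {S : Finset (Fin n)} (hS : S.Nonempty)
    (hSc : Sᶜ.Nonempty) (i : Fin n) :
    #{j ∈ univ.filter (fun j => i < j) | i ∈ S ↔ j ∈ S} ≤ n - 2 := by
  obtain ⟨t, ht⟩ : ∃ t, ¬(i ∈ S ↔ t ∈ S) := by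
    by_cases hi : i ∈ S
    · obtain ⟨t, ht⟩ := hSc
      exact ⟨t, by simp_all⟩
    · obtain ⟨t, ht⟩ := hS
      exact ⟨t, by simp_all⟩
  have hti : t ≠ i := by rintro rfl; simp at ht
  calc #{j ∈ univ.filter (fun j => i < j) | i ∈ S ↔ j ∈ S}
      ≤ #((univ.erase i).erase t) := card_le_card fun j hj => by
        simp only [mem_filter, mem_univ, true_and] at hj
        simp only [mem_erase, mem_univ, and_true]
        exact ⟨by rintro rfl; exact ht hj.2, hj.1.ne'⟩
    _ = n - 2 := by
      rw [card_erase_of_mem (by simpa using hti), card_erase_of_mem (mem_univ i), card_univ,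
        Fintype.card_fin]
      omega

lemma choose_two_add_choose_two_le {a b : ℕ} (ha : 1 ≤ a) (hb : 1 ≤ b) :
    a.choose 2 + b.choose 2 ≤ (a + b - 1).choose 2 := by
  obtain ⟨a, rfl⟩ := Nat.exists_eq_add_of_le' ha
  obtain ⟨b, rfl⟩ := Nat.exists_eq_add_of_le' hb
  rw [show a + 1 + (b + 1) - 1 = a + b + 1 by omega, ← Nat.cast_le (α := ℚ)]
  push_cast [Nat.cast_choose_two]
  nlinarith [mul_nonneg a.cast_nonneg b.cast_nonneg (α := ℚ)]

lemma card_product_filter_lt_eq_sum {α : Type*} [LinearOrder α] (A : Finset α) :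
    #{x ∈ A ×ˢ A | x.1 < x.2} = ∑ i ∈ A, #{j ∈ A | i < j} := by
  rw [card_filter, sum_product]
  simp_rw [card_filter]

lemma sum_card_filter_lt_same_le {n : ℕ} {S : Finset (Fin n)} (hS : S.Nonempty)
    (hSc : Sᶜ.Nonempty) :
    ∑ i, #{j ∈ univ.filter (fun j => i < j) | i ∈ S ↔ j ∈ S} ≤ (n - 1).choose 2 := by
  have hsplit : ∑ i, #{j ∈ univ.filter (fun j => i < j) | i ∈ S ↔ j ∈ S}
      = #{x ∈ S ×ˢ S | x.1 < x.2} + #{x ∈ Sᶜ ×ˢ Sᶜ | x.1 < x.2} := by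
    rw [card_product_filter_lt_eq_sum, card_product_filter_lt_eq_sum, ← sum_add_sum_compl S]
    congr 1 <;> refine sum_congr rfl fun i hi => congrArg card (ext fun j => ?_)
    all_goals simp_all [and_comm]
  have hcard : #S + #Sᶜ = n := by rw [card_add_card_compl, Fintype.card_fin]
  rw [hsplit, card_product_filter_lt, card_product_filter_lt]
  simpa only [hcard] using choose_two_add_choose_two_le hS.card_pos hSc.card_pos

lemma Isym_mul_nonpos {n : ℕ} {S : Finset (Fin n)} (hS : S.Nonempty) (hSc : Sᶜ.Nonempty)
    {Q R : (Fin n → Fin 2) → (Fin n → Fin 2) → ℝ}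
    (hQ0 : ∀ a x, 0 ≤ Q a x) (hQS : DepOn S Q) (hQns : IsNS Q)
    (hR0 : ∀ a x, 0 ≤ R a x) (hRS : DepOn Sᶜ R) (hRns : IsNS R) :
    Isym n (fun a x => Q a x * R a x) ≤ 0 := by
  have hP0 : 0 ≤ Q (zvec n) (zvec n) * R (zvec n) (zvec n) := mul_nonneg (hQ0 _ _) (hR0 _ _)
  have hcount : (∑ i, #{j ∈ univ.filter (fun j => i < j) | i ∈ S ↔ j ∈ S} : ℝ)
      ≤ (n - 1).choose 2 := by exact_mod_cast sum_card_filter_lt_same_le hS hSc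
  have hsum : ∑ i, ∑ j ∈ univ.filter (fun j => i < j),
        liftedCHSH n (fun a x => Q a x * R a x) i j
      ≤ (∑ i, #{j ∈ univ.filter (fun j => i < j) | i ∈ S ↔ j ∈ S} : ℝ)
          * (Q (zvec n) (zvec n) * R (zvec n) (zvec n)) := by
    rw [sum_mul]
    exact sum_le_sum fun i _ => sum_liftedCHSH_mul_le hQ0 hQS hQns hR0 hRS hRns i _
  rw [Isym]
  nlinarith

lemma Icent_mul_nonpos {n : ℕ} (hn : 3 ≤ n) {S : Finset (Fin n)} (hS : S.Nonempty)
    (hSc : Sᶜ.Nonempty) {Q R : (Fin n → Fin 2) → (Fin n → Fin 2) → ℝ}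
    (hQ0 : ∀ a x, 0 ≤ Q a x) (hQS : DepOn S Q) (hQns : IsNS Q)
    (hR0 : ∀ a x, 0 ≤ R a x) (hRS : DepOn Sᶜ R) (hRns : IsNS R) :
    Icent n hn (fun a x => Q a x * R a x) ≤ 0 := by
  have hP0 : 0 ≤ Q (zvec n) (zvec n) * R (zvec n) (zvec n) := mul_nonneg (hQ0 _ _) (hR0 _ _)
  have hcount : (#{j ∈ univ.filter (fun j => (⟨0, by omega⟩ : Fin n) < j) |
      (⟨0, by omega⟩ : Fin n) ∈ S ↔ j ∈ S} : ℝ) ≤ n - 2 := by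
    rw [← Nat.cast_two, ← Nat.cast_sub (by omega)]
    exact_mod_cast card_filter_lt_same_le hS hSc _
  rw [Icent]
  nlinarith [sum_liftedCHSH_mul_le hQ0 hQS hQns hR0 hRS hRns ⟨0, by omega⟩
    (univ.filter fun j => (⟨0, by omega⟩ : Fin n) < j)]

lemma liftedCHSH_sum {n N : ℕ} (q : Fin N → ℝ)
    (P : Fin N → (Fin n → Fin 2) → (Fin n → Fin 2) → ℝ) (i j : Fin n) :
    liftedCHSH n (fun a x => ∑ l, q l * P l a x) i j = ∑ l, q l * liftedCHSH n (P l) i j := by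
  simp only [liftedCHSH, mul_sub, sum_sub_distrib]

lemma Isym_sum {n N : ℕ} (q : Fin N → ℝ) (P : Fin N → (Fin n → Fin 2) → (Fin n → Fin 2) → ℝ) :
    Isym n (fun a x => ∑ l, q l * P l a x) = ∑ l, q l * Isym n (P l) := by
  simp only [Isym, liftedCHSH_sum, mul_sub, sum_sub_distrib, mul_sum, mul_left_comm (q _)]
  rw [sum_comm]
  congr 1
  exact sum_congr rfl fun i _ => sum_comm

lemma Icent_sum {n N : ℕ} (hn : 3 ≤ n) (q : Fin N → ℝ)
    (P : Fin N → (Fin n → Fin 2) → (Fin n → Fin 2) → ℝ) :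
    Icent n hn (fun a x => ∑ l, q l * P l a x) = ∑ l, q l * Icent n hn (P l) := by
  simp only [Icent, liftedCHSH_sum, mul_sub, sum_sub_distrib, mul_sum, mul_left_comm (q _)]
  rw [sum_comm]

theorem stmt14_general (n : ℕ) (hn : 3 ≤ n) (N : ℕ) (q : Fin N → ℝ)
    (g : Fin N → Finset (Fin n))
    (Q R : Fin N → (Fin n → Fin 2) → (Fin n → Fin 2) → ℝ)
    (hq : ∀ l, 0 ≤ q l)
    (hgroups : ∀ l, (g l).Nonempty ∧ (g l)ᶜ.Nonempty)
    (hQ : ∀ l, IsDistOn (g l) (Q l) ∧ IsNS (Q l))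
    (hR : ∀ l, IsDistOn (g l)ᶜ (R l) ∧ IsNS (R l))
    (P : (Fin n → Fin 2) → (Fin n → Fin 2) → ℝ)
    (hP : ∀ a x, P a x = ∑ l, q l * Q l a x * R l a x) :
    Isym n P ≤ 0 ∧ Icent n hn P ≤ 0 := by
  obtain rfl : P = fun a x => ∑ l, q l * (Q l a x * R l a x) := by
    funext a x
    simp only [hP, mul_assoc]
  rw [Isym_sum, Icent_sum]
  refine ⟨sum_nonpos fun l _ => mul_nonpos_of_nonneg_of_nonpos (hq l) ?_,
    sum_nonpos fun l _ => mul_nonpos_of_nonneg_of_nonpos (hq l) ?_⟩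
  · exact Isym_mul_nonpos (hgroups l).1 (hgroups l).2 (hQ l).1.1 (hQ l).1.2.2 (hQ l).2
      (hR l).1.1 (hR l).1.2.2 (hR l).2
  · exact Icent_mul_nonpos hn (hgroups l).1 (hgroups l).2 (hQ l).1.1 (hQ l).1.2.2 (hQ l).2
      (hR l).1.1 (hR l).1.2.2 (hR l).2

/-- any `n`-partite biseparable distribution — a convex combination, over
bipartitions `g λ | (g λ)ᶜ`, of products of no-signalling distributions — satisfies both
`I_sym ≤ 0` and `I_① ≤ 0`. -/
theorem stmt14 (n : ℕ) (hn : 3 ≤ n) (N : ℕ) (q : Fin N → ℝ)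
    (g : Fin N → Finset (Fin n))
    (Q R : Fin N → (Fin n → Fin 2) → (Fin n → Fin 2) → ℝ)
    (hq : ∀ l, 0 ≤ q l) (hqsum : ∑ l, q l = 1)
    (hgroups : ∀ l, (g l).Nonempty ∧ (g l)ᶜ.Nonempty)
    (hQ : ∀ l, IsDistOn (g l) (Q l) ∧ IsNS (Q l))
    (hR : ∀ l, IsDistOn (g l)ᶜ (R l) ∧ IsNS (R l))
    (P : (Fin n → Fin 2) → (Fin n → Fin 2) → ℝ)
    (hP : ∀ a x, P a x = ∑ l, q l * Q l a x * R l a x) :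
    Isym n P ≤ 0 ∧ Icent n hn P ≤ 0 :=
  stmt14_general n hn N q g Q R hq hgroups hQ hR P hP
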